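/- arXiv:2305.17365 — 2 statements merged into one kernel-verified Lean document; each statement's English description precedes it below -/
import Mathlib

section
/- Let d ≥ 3, let v_1, …, v_d be distinct unit vectors in ℝ^d and b_1, …, b_d ∈ ℝ satisfying (R1), (R2) and (R3). Let A = {x ∈ ℝ^d : x·v_j ≤ b_j for j = 1,…,d}, F_j = {x ∈ A : x·v_j = b_j}, and S_j := {y + s v_j : y ∈ relint(F_j), s > 0}. Then S_j ∩ S_k = ∅ for all j ≠ k. -/
/-!
If `x = y + s • v j = z + t • v k` with `y ∈ F j`, `z ∈ F k` and `s, t > 0`, then pairing with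
`v k` and `v j` and using `y ⬝ᵥ v k ≤ b k`, `z ⬝ᵥ v j ≤ b j` gives `t ≤ s c` and `s ≤ t c` for
`c = v j ⬝ᵥ v k`. Hence `c ≥ 1`, which for unit vectors forces `v j = v k`.
-/

open MeasureTheory Matrix Real

/-- matrix whose columns are the vectors `u 0, …, u (r-1)` -/
noncomputable def colMat {d r : ℕ} (u : Fin r → Fin d → ℝ) : Matrix (Fin d) (Fin r) ℝ :=
  Matrix.of fun i m => u m i

/-- matrix whose columns are the vectors `(u m, c m) ∈ ℝ^{d+1}` -/
noncomputable def augMat {d r : ℕ} (u : Fin r → Fin d → ℝ) (c : Fin r → ℝ) :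
    Matrix (Fin d ⊕ Unit) (Fin r) ℝ :=
  Matrix.of fun i m => Sum.elim (fun i' => u m i') (fun _ => c m) i

section DotProduct

variable {n R : Type*} [Fintype n] [CommRing R] [LinearOrder R] [IsStrictOrderedRing R]

theorem eq_of_dotProduct_self_eq_one_of_one_le_dotProduct {u w : n → R}
    (hu : u ⬝ᵥ u = 1) (hw : w ⬝ᵥ w = 1) (huw : 1 ≤ u ⬝ᵥ w) : u = w := by
  have hexpand : (u - w) ⬝ᵥ (u - w) = u ⬝ᵥ u + w ⬝ᵥ w - 2 * (u ⬝ᵥ w) := by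
    simp only [sub_dotProduct, dotProduct_sub, dotProduct_comm w u]
    ring
  have hzero : (u - w) ⬝ᵥ (u - w) = 0 :=
    le_antisymm (by linarith) (Finset.sum_nonneg fun i _ => mul_self_nonneg ((u - w) i))
  exact sub_eq_zero.mp (dotProduct_self_eq_zero.mp hzero)

theorem one_le_dotProduct_of_add_smul_eq_add_smul {u w y z : n → R} {α β s t : R}
    (hu : u ⬝ᵥ u = 1) (hw : w ⬝ᵥ w = 1)
    (hyu : y ⬝ᵥ u = α) (hyw : y ⬝ᵥ w ≤ β) (hzu : z ⬝ᵥ u ≤ α) (hzw : z ⬝ᵥ w = β)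
    (hs : 0 < s) (ht : 0 < t) (h : y + s • u = z + t • w) : 1 ≤ u ⬝ᵥ w := by
  have hpair : ∀ p : n → R, y ⬝ᵥ p + s * (u ⬝ᵥ p) = z ⬝ᵥ p + t * (w ⬝ᵥ p) := fun p => by
    simpa only [add_dotProduct, smul_dotProduct, smul_eq_mul] using congrArg (· ⬝ᵥ p) h
  have hpair_w := hpair w
  have hpair_u := hpair u
  rw [hw] at hpair_w
  rw [hu, dotProduct_comm w u] at hpair_u
  have hts : t ≤ s * (u ⬝ᵥ w) := by linarith
  have hst : s ≤ t * (u ⬝ᵥ w) := by linarith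
  nlinarith

end DotProduct

/-- under (R1), (R2), (R3), the outer regions
`S_j = {y + s v_j : y ∈ relint F_j, s > 0}` are pairwise disjoint. -/
theorem stmt14 :
    ∀ d : ℕ, 3 ≤ d →
    ∀ v : Fin d → (Fin d → ℝ), Function.Injective v → (∀ j, ∑ i, v j i ^ 2 = 1) →
    ∀ b : Fin d → ℝ,
      -- (R1)
      (∀ j k : Fin d, j < k →
        (colMat ![v j, v k]).rank < 2 →
        (colMat ![v j, v k]).rank < (augMat ![v j, v k] ![b j, b k]).rank) →
      -- (R2)
      (∀ j k l : Fin d, j < k → k < l →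
        (colMat ![v j, v k, v l]).rank < 3 →
        (colMat ![v j, v k, v l]).rank < (augMat ![v j, v k, v l] ![b j, b k, b l]).rank) →
      -- (R3)
      (∀ j k l s : Fin d, j < k → k < l → l < s →
        (colMat ![v j, v k, v l, v s]).rank < 4 →
        (colMat ![v j, v k, v l, v s]).rank <
          (augMat ![v j, v k, v l, v s] ![b j, b k, b l, b s]).rank) →
      letI A : Set (Fin d → ℝ) := {x | ∀ m, x ⬝ᵥ v m ≤ b m}
      letI F : Fin d → Set (Fin d → ℝ) := fun j => {x | x ∈ A ∧ x ⬝ᵥ v j = b j}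
      letI S : Fin d → Set (Fin d → ℝ) := fun j =>
        {x | ∃ y ∈ intrinsicInterior ℝ (F j), ∃ s : ℝ, 0 < s ∧ x = y + s • v j}
      ∀ j k : Fin d, j ≠ k → S j ∩ S k = ∅ := by
  intro d _ v hinj hunit b _ _ _ j k hjk
  have hself : ∀ m, v m ⬝ᵥ v m = 1 := fun m => by
    simpa only [dotProduct, sq] using hunit m
  refine Set.eq_empty_iff_forall_notMem.mpr ?_
  rintro x ⟨⟨y, hy, s, hs, rfl⟩, ⟨z, hz, t, ht, hyz⟩⟩
  obtain ⟨hyA, hyj⟩ := intrinsicInterior_subset hy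
  obtain ⟨hzA, hzk⟩ := intrinsicInterior_subset hz
  have hcos : 1 ≤ v j ⬝ᵥ v k := one_le_dotProduct_of_add_smul_eq_add_smul
    (hself j) (hself k) hyj (hyA k) (hzA j) hzk hs ht hyz
  exact hjk (hinj (eq_of_dotProduct_self_eq_one_of_one_le_dotProduct (hself j) (hself k) hcos))
end

section
/- Let d ≥ 3, let v_1, …, v_d be distinct unit vectors in ℝ^d and b_1, …, b_d ∈ ℝ satisfying (R1), (R2) and (R3). Let A = {x ∈ ℝ^d : x·v_j ≤ b_j for j = 1,…,d}, F_j = {x ∈ A : x·v_j = b_j}, F_{jk} = F_j ∩ F_k, and for 1 ≤ j < k ≤ d let S_{jk} := {y + s v_j + t v_k : y ∈ relint(F_{jk}), s > 0, t > 0}. Then S_{jk} ∩ S_{j'k'} = ∅ whenever {j, k} ≠ {j', k'} as two-element index sets. -/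
open MeasureTheory Matrix Real

/-! If `x = y + s v_j + t v_k = y' + s' v_j' + t' v_k'` with `y ∈ F_{jk}` and `y' ∈ F_{j'k'}`,
then `x - y` and `x - y'` lie in the normal cones of `A` at `y` and `y'`, and expanding
`‖y - y'‖²` gives `y = y'`. At this point all (three or four) constraints `j, k, j', k'` are
active, so the linear system `z ⬝ v_i = b_i` over them is consistent and its augmented matrix has
the same rank as its coefficient matrix; by (R1)–(R3) the normals `v_j, v_k, v_j', v_k'` are then
linearly independent, and `s v_j + t v_k = s' v_j' + t' v_k'` with positive coefficients forces
`{j, k} = {j', k'}`. -/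

lemma rank_augMat_le_rank_colMat {d r : ℕ} (u : Fin r → Fin d → ℝ) (c : Fin r → ℝ)
    {y : Fin d → ℝ} (hy : ∀ m, y ⬝ᵥ u m = c m) :
    (augMat u c).rank ≤ (colMat u).rank := by
  have h : augMat u c = Matrix.fromRows 1 (Matrix.replicateRow Unit y) * colMat u := by
    ext (i | _) m
    · simp [augMat, colMat, Matrix.mul_apply, Matrix.one_apply]
    · simp [augMat, colMat, Matrix.mul_apply, ← hy m, dotProduct]
  rw [h]
  exact Matrix.rank_mul_le_right _ _

lemma linearIndependent_of_rank_colMat_eq {d r : ℕ} {u : Fin r → Fin d → ℝ}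
    (h : (colMat u).rank = r) : LinearIndependent ℝ u := by
  rw [linearIndependent_iff_card_eq_finrank_span, Fintype.card_fin]
  exact h.symm.trans (Matrix.rank_eq_finrank_span_cols _)

lemma linearIndependent_of_rank_lt_rank_augMat {d r : ℕ} {u : Fin r → Fin d → ℝ}
    {c : Fin r → ℝ} {y : Fin d → ℝ} (hy : ∀ m, y ⬝ᵥ u m = c m)
    (hR : (colMat u).rank < r → (colMat u).rank < (augMat u c).rank) :
    LinearIndependent ℝ u :=
  linearIndependent_of_rank_colMat_eq <| (colMat u).rank_le_width.eq_of_not_lt fun hlt =>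
    (hR hlt).not_ge (rank_augMat_le_rank_colMat u c hy)

lemma linearIndepOn_of_rank_lt_rank_augMat {ι : Type*} [LinearOrder ι] {d r : ℕ}
    (v : ι → Fin d → ℝ) (b : ι → ℝ)
    (hR : ∀ a : Fin r → ι, StrictMono a → (colMat (v ∘ a)).rank < r →
      (colMat (v ∘ a)).rank < (augMat (v ∘ a) (b ∘ a)).rank)
    {T : Finset ι} (hT : T.card = r) {y : Fin d → ℝ} (hy : ∀ i ∈ T, y ⬝ᵥ v i = b i) :
    LinearIndepOn ℝ v T := by
  let a := T.orderEmbOfFin hT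
  rw [← T.range_orderEmbOfFin hT, linearIndepOn_range_iff a.injective]
  exact linearIndependent_of_rank_lt_rank_augMat (fun m => hy _ (T.orderEmbOfFin_mem hT m))
    (hR a a.strictMono)

lemma linearIndepOn_of_active_of_card_le_four {ι : Type*} [LinearOrder ι] {d : ℕ}
    {v : ι → Fin d → ℝ} {b : ι → ℝ}
    (hR1 : ∀ j k : ι, j < k →
        (colMat ![v j, v k]).rank < 2 →
        (colMat ![v j, v k]).rank < (augMat ![v j, v k] ![b j, b k]).rank)
    (hR2 : ∀ j k l : ι, j < k → k < l →
        (colMat ![v j, v k, v l]).rank < 3 →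
        (colMat ![v j, v k, v l]).rank < (augMat ![v j, v k, v l] ![b j, b k, b l]).rank)
    (hR3 : ∀ j k l s : ι, j < k → k < l → l < s →
        (colMat ![v j, v k, v l, v s]).rank < 4 →
        (colMat ![v j, v k, v l, v s]).rank <
          (augMat ![v j, v k, v l, v s] ![b j, b k, b l, b s]).rank)
    {T : Finset ι} (h2 : 2 ≤ T.card) (h4 : T.card ≤ 4) {y : Fin d → ℝ}
    (hy : ∀ i ∈ T, y ⬝ᵥ v i = b i) :
    LinearIndepOn ℝ v T := by
  -- `FinVec.map v a` unfolds to `![v (a 0), …]`, the shape in which (R1)–(R3) are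
  -- stated.
  obtain h | h | h : T.card = 2 ∨ T.card = 3 ∨ T.card = 4 := by omega
  · refine linearIndepOn_of_rank_lt_rank_augMat v b (fun a ha => ?_) h hy
    rw [← FinVec.map_eq, ← FinVec.map_eq]
    exact hR1 _ _ (ha (by decide))
  · refine linearIndepOn_of_rank_lt_rank_augMat v b (fun a ha => ?_) h hy
    rw [← FinVec.map_eq, ← FinVec.map_eq]
    exact hR2 _ _ _ (ha (by decide)) (ha (by decide))
  · refine linearIndepOn_of_rank_lt_rank_augMat v b (fun a ha => ?_) h hy
    rw [← FinVec.map_eq, ← FinVec.map_eq]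
    exact hR3 _ _ _ _ (ha (by decide)) (ha (by decide)) (ha (by decide))

lemma dotProduct_sub_smul_add_smul_nonneg {ι κ : Type*} [Fintype ι] {v : κ → ι → ℝ}
    {b : κ → ℝ} {y z : ι → ℝ} {j k : κ} (hyj : y ⬝ᵥ v j = b j) (hyk : y ⬝ᵥ v k = b k)
    (hz : ∀ m, z ⬝ᵥ v m ≤ b m) {s t : ℝ} (hs : 0 ≤ s) (ht : 0 ≤ t) :
    0 ≤ (y - z) ⬝ᵥ (s • v j + t • v k) := by
  rw [dotProduct_add, dotProduct_smul, dotProduct_smul, sub_dotProduct, sub_dotProduct, hyj, hyk,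
    smul_eq_mul, smul_eq_mul]
  exact add_nonneg (mul_nonneg hs (sub_nonneg.2 (hz j))) (mul_nonneg ht (sub_nonneg.2 (hz k)))

lemma eq_of_add_eq_add_of_dotProduct_sub_nonneg {ι : Type*} [Fintype ι] {y y' n n' : ι → ℝ}
    (h : y + n = y' + n') (hn : 0 ≤ (y - y') ⬝ᵥ n) (hn' : 0 ≤ (y' - y) ⬝ᵥ n') : y = y' := by
  have hsub : y - y' = n' - n := sub_eq_sub_iff_add_eq_add.2 (by rw [h, add_comm])
  have hle : (y - y') ⬝ᵥ (y - y') ≤ 0 := by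
    calc (y - y') ⬝ᵥ (y - y') = -((y' - y) ⬝ᵥ n') - (y - y') ⬝ᵥ n := by
          rw [← neg_dotProduct, neg_sub, ← dotProduct_sub, ← hsub]
      _ ≤ 0 := by linarith
  have hself : (y - y') ⬝ᵥ (y - y') = 0 :=
    le_antisymm hle (Fintype.sum_nonneg fun _ => mul_self_nonneg _)
  exact sub_eq_zero.1 (dotProduct_self_eq_zero.1 hself)

lemma Finsupp.single_add_single_apply_pos_iff {ι : Type*} {j k i : ι} {s t : ℝ}
    (hs : 0 < s) (ht : 0 < t) :
    0 < (Finsupp.single j s + Finsupp.single k t) i ↔ i = j ∨ i = k := by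
  classical
  rw [Finsupp.add_apply, Finsupp.single_apply, Finsupp.single_apply]
  split_ifs <;> simp_all [eq_comm, add_pos]

lemma pair_eq_of_smul_add_smul_eq {ι M : Type*} [AddCommGroup M] [Module ℝ M] {v : ι → M}
    {j k j' k' : ι} (hv : LinearIndepOn ℝ v {j, k, j', k'}) {s t s' t' : ℝ} (hs : 0 < s)
    (ht : 0 < t) (hs' : 0 < s') (ht' : 0 < t')
    (h : s • v j + t • v k = s' • v j' + t' • v k') : ({j, k} : Set ι) = {j', k'} := by
  have hsupp : ∀ a c : ι, a ∈ ({j, k, j', k'} : Set ι) → c ∈ ({j, k, j', k'} : Set ι) →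
      ∀ p q : ℝ, Finsupp.single a p + Finsupp.single c q ∈
        Finsupp.supported ℝ ℝ ({j, k, j', k'} : Set ι) := fun a c ha hc p q =>
    add_mem (Finsupp.single_mem_supported ℝ p ha) (Finsupp.single_mem_supported ℝ q hc)
  have hf := linearIndepOn_iffₛ.1 hv _ (hsupp j k (by simp) (by simp) s t) _
    (hsupp j' k' (by simp) (by simp) s' t') (by simpa using h)
  ext i
  have hi := Finsupp.single_add_single_apply_pos_iff (j := j) (k := k) (i := i) hs ht
  rw [hf, Finsupp.single_add_single_apply_pos_iff hs' ht'] at hi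
  simp only [Set.mem_insert_iff, Set.mem_singleton_iff]
  exact hi.symm

/-- under (R1), (R2), (R3), the outer regions
`S_{jk} = {y + s v_j + t v_k : y ∈ relint F_{jk}, s, t > 0}` (for `j < k`) are
pairwise disjoint. -/
theorem stmt15 :
    ∀ d : ℕ, 3 ≤ d →
    ∀ v : Fin d → (Fin d → ℝ), Function.Injective v → (∀ j, ∑ i, v j i ^ 2 = 1) →
    ∀ b : Fin d → ℝ,
      -- (R1)
      (∀ j k : Fin d, j < k →
        (colMat ![v j, v k]).rank < 2 →
        (colMat ![v j, v k]).rank < (augMat ![v j, v k] ![b j, b k]).rank) →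
      -- (R2)
      (∀ j k l : Fin d, j < k → k < l →
        (colMat ![v j, v k, v l]).rank < 3 →
        (colMat ![v j, v k, v l]).rank < (augMat ![v j, v k, v l] ![b j, b k, b l]).rank) →
      -- (R3)
      (∀ j k l s : Fin d, j < k → k < l → l < s →
        (colMat ![v j, v k, v l, v s]).rank < 4 →
        (colMat ![v j, v k, v l, v s]).rank <
          (augMat ![v j, v k, v l, v s] ![b j, b k, b l, b s]).rank) →
      letI A : Set (Fin d → ℝ) := {x | ∀ m, x ⬝ᵥ v m ≤ b m}
      letI F : Fin d → Set (Fin d → ℝ) := fun j => {x | x ∈ A ∧ x ⬝ᵥ v j = b j}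
      letI S : Fin d → Fin d → Set (Fin d → ℝ) := fun j k =>
        {x | ∃ y ∈ intrinsicInterior ℝ (F j ∩ F k), ∃ s t : ℝ, 0 < s ∧ 0 < t ∧
          x = y + s • v j + t • v k}
      ∀ j k j' k' : Fin d, j < k → j' < k' →
        ({j, k} : Finset (Fin d)) ≠ ({j', k'} : Finset (Fin d)) →
        S j k ∩ S j' k' = ∅ := by
  intro d _ v _ _ b hR1 hR2 hR3 j k j' k' hjk _ hne
  refine Set.eq_empty_iff_forall_notMem.2 ?_
  rintro x ⟨⟨y, hy, s, t, hs, ht, rfl⟩, y', hy', s', t', hs', ht', hx⟩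
  obtain ⟨⟨hyA, hyj⟩, -, hyk⟩ := intrinsicInterior_subset hy
  obtain ⟨⟨hy'A, hy'j'⟩, -, hy'k'⟩ := intrinsicInterior_subset hy'
  have hx' : y + (s • v j + t • v k) = y' + (s' • v j' + t' • v k') := by
    simpa only [add_assoc] using hx
  obtain rfl : y = y' := eq_of_add_eq_add_of_dotProduct_sub_nonneg hx'
    (dotProduct_sub_smul_add_smul_nonneg hyj hyk hy'A hs.le ht.le)
    (dotProduct_sub_smul_add_smul_nonneg hy'j' hy'k' hyA hs'.le ht'.le)
  have hcard : 2 ≤ ({j, k, j', k'} : Finset (Fin d)).card :=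
    (Finset.card_pair hjk.ne).ge.trans (Finset.card_le_card (by simp [Finset.subset_iff]))
  have hactive : ∀ i ∈ ({j, k, j', k'} : Finset (Fin d)), y ⬝ᵥ v i = b i := by
    simp only [Finset.mem_insert, Finset.mem_singleton]
    rintro i (rfl | rfl | rfl | rfl) <;> assumption
  have hv := linearIndepOn_of_active_of_card_le_four hR1 hR2 hR3 hcard Finset.card_le_four hactive
  apply hne
  rw [← Finset.coe_inj]
  push_cast at hv ⊢
  exact pair_eq_of_smul_add_smul_eq hv hs ht hs' ht' (add_left_cancel hx')
end
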